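/- For a, b, c real constants with a(x²+y²) + 1 > 0 and c + bz + az² > 0, the function u(x,y,z) = log(4(c + bz + az²)) − 2 log(1 + a(x² + y²)) satisfies the SU(∞) Toda field equation u_xx + u_yy + (e^u)_zz = 0. -/

import Mathlib

/-! With K = 1 + a(x² + y²), the x- and y-parts of u are -2 log K, whose Laplacian is -8a/K², while
e^u = 4(c + bz + az²)/K² is a quadratic in z with second derivative 8a/K². -/

/-- `u(x,y,z) = log(4(c + bz + az²)) − 2 log(1 + a(x² + y²))`. -/
noncomputable def uToda (a b c x y z : ℝ) : ℝ :=
  Real.log (4 * (c + b * z + a * z ^ 2)) - 2 * Real.log (1 + a * (x ^ 2 + y ^ 2))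

open Filter Topology

theorem deriv_deriv_eq_of_eventually_hasDerivAt {𝕜 F : Type*} [NontriviallyNormedField 𝕜]
    [NormedAddCommGroup F] [NormedSpace 𝕜 F] {f f' : 𝕜 → F} {x : 𝕜} {f'' : F}
    (hf : ∀ᶠ t in 𝓝 x, HasDerivAt f (f' t) t) (hf' : HasDerivAt f' f'' x) :
    deriv (deriv f) x = f'' := by
  have hderiv : deriv f =ᶠ[𝓝 x] f' := hf.mono fun _ ht => ht.deriv
  rw [hderiv.deriv_eq, hf'.deriv]

theorem deriv_deriv_const_mul_quadratic (m a b c z : ℝ) :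
    deriv (deriv fun t => m * (c + b * t + a * t ^ 2)) z = 2 * m * a := by
  refine deriv_deriv_eq_of_eventually_hasDerivAt (f' := fun t => m * (b + 2 * a * t))
    (Eventually.of_forall fun t => ?_) ?_
  · exact ((((hasDerivAt_id' t).const_mul b).const_add c).add
      ((hasDerivAt_pow 2 t).const_mul a)).const_mul m |>.congr_deriv (by ring)
  · exact (((hasDerivAt_id' z).const_mul (2 * a)).const_add b).const_mul m
      |>.congr_deriv (by ring)

theorem uToda_comm (a b c x y z : ℝ) : uToda a b c x y z = uToda a b c y x z := by
  rw [uToda, uToda, add_comm (x ^ 2)]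

theorem hasDerivAt_one_add_mul_sq_add (a s t : ℝ) :
    HasDerivAt (fun t' => 1 + a * (t' ^ 2 + s)) (2 * a * t) t :=
  (((hasDerivAt_pow 2 t).add_const s).const_mul a).const_add 1 |>.congr_deriv (by ring)

theorem hasDerivAt_uToda_x (a b c y z x : ℝ) (h : 1 + a * (x ^ 2 + y ^ 2) ≠ 0) :
    HasDerivAt (fun x' => uToda a b c x' y z) (-(4 * a * x) / (1 + a * (x ^ 2 + y ^ 2))) x :=
  (((hasDerivAt_one_add_mul_sq_add a (y ^ 2) x).log h).const_mul 2).const_sub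
    (Real.log (4 * (c + b * z + a * z ^ 2))) |>.congr_deriv (by ring)

theorem deriv_deriv_uToda_x (a b c y z x : ℝ) (h : 1 + a * (x ^ 2 + y ^ 2) ≠ 0) :
    deriv (deriv fun x' => uToda a b c x' y z) x
      = -4 * a * (1 + a * (y ^ 2 - x ^ 2)) / (1 + a * (x ^ 2 + y ^ 2)) ^ 2 := by
  have hK := hasDerivAt_one_add_mul_sq_add a (y ^ 2) x
  have hne : ∀ᶠ t in 𝓝 x, 1 + a * (t ^ 2 + y ^ 2) ≠ 0 := hK.continuousAt.eventually_ne h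
  refine deriv_deriv_eq_of_eventually_hasDerivAt
    (hne.mono fun t ht => hasDerivAt_uToda_x a b c y z t ht) ?_
  exact ((hasDerivAt_id' x).const_mul (4 * a)).fun_neg.div hK h |>.congr_deriv (by ring)

theorem deriv_deriv_uToda_y (a b c x z y : ℝ) (h : 1 + a * (x ^ 2 + y ^ 2) ≠ 0) :
    deriv (deriv fun y' => uToda a b c x y' z) y
      = -4 * a * (1 + a * (x ^ 2 - y ^ 2)) / (1 + a * (x ^ 2 + y ^ 2)) ^ 2 := by
  simp_rw [uToda_comm a b c x]
  rw [deriv_deriv_uToda_x a b c x z y (by rwa [add_comm (y ^ 2)]), add_comm (y ^ 2)]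

theorem exp_uToda (a b c x y z : ℝ) (h1 : 0 < 1 + a * (x ^ 2 + y ^ 2))
    (h2 : 0 < c + b * z + a * z ^ 2) :
    Real.exp (uToda a b c x y z)
      = 4 / (1 + a * (x ^ 2 + y ^ 2)) ^ 2 * (c + b * z + a * z ^ 2) := by
  rw [uToda, Real.exp_sub, Real.exp_log (by positivity), ← Real.log_rpow h1,
    Real.exp_log (by positivity)]
  norm_cast
  ring

theorem deriv_deriv_exp_uToda_z (a b c x y z : ℝ) (h1 : 0 < 1 + a * (x ^ 2 + y ^ 2))
    (h2 : 0 < c + b * z + a * z ^ 2) :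
    deriv (deriv fun z' => Real.exp (uToda a b c x y z')) z
      = 8 * a / (1 + a * (x ^ 2 + y ^ 2)) ^ 2 := by
  have hpos : ∀ᶠ t in 𝓝 z, 0 < c + b * t + a * t ^ 2 :=
    (by fun_prop : Continuous fun t : ℝ => c + b * t + a * t ^ 2).continuousAt.eventually
      (lt_mem_nhds h2)
  have hexp : (fun z' => Real.exp (uToda a b c x y z'))
      =ᶠ[𝓝 z] fun t => 4 / (1 + a * (x ^ 2 + y ^ 2)) ^ 2 * (c + b * t + a * t ^ 2) :=
    hpos.mono fun t ht => exp_uToda a b c x y t h1 ht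
  rw [hexp.deriv.deriv_eq,
    deriv_deriv_const_mul_quadratic]
  ring

/-- the function `u` above satisfies the SU(∞) Toda field equation
`u_xx + u_yy + (e^u)_zz = 0` wherever `1 + a(x²+y²) > 0` and `c + bz + az² > 0`. -/
theorem stmt7 (a b c x y z : ℝ)
    (h1 : 0 < 1 + a * (x ^ 2 + y ^ 2)) (h2 : 0 < c + b * z + a * z ^ 2) :
    deriv (deriv (fun x' => uToda a b c x' y z)) x
      + deriv (deriv (fun y' => uToda a b c x y' z)) y
      + deriv (deriv (fun z' => Real.exp (uToda a b c x y z'))) z = 0 := by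
  rw [deriv_deriv_uToda_x a b c y z x h1.ne', deriv_deriv_uToda_y a b c x z y h1.ne',
    deriv_deriv_exp_uToda_z a b c x y z h1 h2]
  field_simp
  ring
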